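/- arXiv:math/0301209 — 4 statements merged into one kernel-verified Lean document; each statement's English description precedes it below -/
import Mathlib

section
/- Given a comonad G on a monoidal category C such that the comonad functor is lax monoidal and the counit and comultiplication are monoidal natural transformations (i.e. G is a monoidal comonad), the Eilenberg–Moore category of G-coalgebras carries a monoidal structure such that the forgetful functor to C is strong monoidal. -/
open CategoryTheory MonoidalCategory Functor.LaxMonoidal

/-!
Monoidality of `G.ε` and `G.δ` is exactly what makes the composite
`A ⊗ B ⟶ GA ⊗ GB ⟶ G(A ⊗ B)` satisfy the counit and coassociativity laws, and the
associativity and unitality axioms of the lax structure `μ, ε` of `G` say precisely that the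
associator and unitors of `C` are coalgebra morphisms. All monoidal category axioms then hold
in `G.Coalgebra` because they hold in `C` and the forgetful functor is faithful; by
construction the forgetful functor preserves the tensor product and unit on the nose.
-/

namespace CategoryTheory.Comonad

variable {C : Type*} [Category C] [MonoidalCategory C] (G : Comonad C) [G.toFunctor.LaxMonoidal]
  [NatTrans.IsMonoidal G.ε] [NatTrans.IsMonoidal G.δ]

@[reducible, simps]
def tensorCoalgebra (A B : G.Coalgebra) : G.Coalgebra where
  A := A.A ⊗ B.A
  a := (A.a ⊗ₘ B.a) ≫ μ G.toFunctor A.A B.A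
  counit := by
    rw [Category.assoc, NatTrans.IsMonoidal.tensor]
    simp [Coalgebra.counit]
  coassoc := by
    rw [Category.assoc, NatTrans.IsMonoidal.tensor, comp_μ, tensorHom_comp_tensorHom_assoc,
      A.coassoc, B.coassoc, ← tensorHom_comp_tensorHom_assoc, μ_natural_assoc, Functor.map_comp,
      Category.assoc]

@[reducible]
def unitCoalgebra : G.Coalgebra where
  A := 𝟙_ C
  a := Functor.LaxMonoidal.ε G.toFunctor
  counit := NatTrans.IsMonoidal.unit
  coassoc := by rw [NatTrans.IsMonoidal.unit (τ := G.δ), comp_ε]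

variable {G}

def tensorCoalgebraHom {A A' B B' : G.Coalgebra} (f : A ⟶ A') (g : B ⟶ B') :
    tensorCoalgebra G A B ⟶ tensorCoalgebra G A' B' where
  f := f.f ⊗ₘ g.f
  h := by
    rw [tensorCoalgebra_a, tensorCoalgebra_a, Category.assoc, ← μ_natural,
      tensorHom_comp_tensorHom_assoc, tensorHom_comp_tensorHom_assoc, f.h, g.h]

instance coalgebraMonoidalCategoryStruct : MonoidalCategoryStruct G.Coalgebra where
  tensorObj := tensorCoalgebra G
  tensorUnit := unitCoalgebra G
  tensorHom := tensorCoalgebraHom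
  whiskerLeft A _ _ f := tensorCoalgebraHom (𝟙 A) f
  whiskerRight f B := tensorCoalgebraHom f (𝟙 B)
  associator A B D := Coalgebra.isoMk (α_ A.A B.A D.A) <| by
    rw [tensorCoalgebra_a, tensorCoalgebra_a, Category.assoc, ← tensorHom_comp_whiskerRight_assoc,
      associativity, associator_naturality_assoc, tensorHom_comp_whiskerLeft_assoc]
  leftUnitor A := Coalgebra.isoMk (λ_ A.A) <| by
    rw [tensorCoalgebra_a, Category.assoc, tensorHom_def'_assoc, ← left_unitality,
      leftUnitor_naturality]
  rightUnitor A := Coalgebra.isoMk (ρ_ A.A) <| by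
    rw [tensorCoalgebra_a, Category.assoc, MonoidalCategory.tensorHom_def_assoc,
      ← right_unitality, rightUnitor_naturality]

namespace Coalgebra

variable {A A' B B' : G.Coalgebra}

@[simp]
lemma tensorObj_A : (A ⊗ B).A = A.A ⊗ B.A := rfl

@[simp]
lemma tensorUnit_A : (𝟙_ G.Coalgebra).A = 𝟙_ C := rfl

@[simp]
lemma tensorHom_f (f : A ⟶ A') (g : B ⟶ B') : (f ⊗ₘ g).f = f.f ⊗ₘ g.f := rfl

@[simp]
lemma whiskerLeft_f (f : B ⟶ B') : (A ◁ f).f = A.A ◁ f.f := id_tensorHom _ _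

@[simp]
lemma whiskerRight_f (f : A ⟶ A') : (f ▷ B).f = f.f ▷ B.A := tensorHom_id _ _

@[simp]
lemma associator_hom_f (D : G.Coalgebra) : (α_ A B D).hom.f = (α_ A.A B.A D.A).hom := rfl

@[simp]
lemma leftUnitor_hom_f : (λ_ A).hom.f = (λ_ A.A).hom := rfl

@[simp]
lemma rightUnitor_hom_f : (ρ_ A).hom.f = (ρ_ A.A).hom := rfl

end Coalgebra

-- Unfolding `forget` makes `G.forget.obj A` reducibly equal to `A.A`; otherwise `simp` cannot
-- cancel the identities coming from `Iso.refl`.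
def forgetInducingFunctorData : Monoidal.InducingFunctorData G.forget where
  μIso A B := Iso.refl (A.A ⊗ B.A)
  εIso := Iso.refl (𝟙_ C)
  whiskerLeft_eq _ _ _ _ := by simp [Comonad.forget]
  whiskerRight_eq _ _ := by simp [Comonad.forget]
  tensorHom_eq _ _ := by simp [Comonad.forget]
  associator_eq _ _ _ := by simp [Comonad.forget]
  leftUnitor_eq _ := by simp [Comonad.forget]
  rightUnitor_eq _ := by simp [Comonad.forget]

end CategoryTheory.Comonad

/-- Given a monoidal comonad `G` on a monoidal category `C` (a comonad whose
underlying endofunctor is lax monoidal and whose counit and comultiplication are monoidal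
natural transformations), the Eilenberg–Moore category of `G`-coalgebras carries a
monoidal structure such that the forgetful functor to `C` is strong monoidal. -/
theorem stmt_7 {C : Type*} [Category C] [MonoidalCategory C] (G : Comonad C)
    [G.toFunctor.LaxMonoidal]
    [NatTrans.IsMonoidal G.ε] [NatTrans.IsMonoidal G.δ] :
    ∃ M : MonoidalCategory G.Coalgebra,
      Nonempty (@Functor.Monoidal G.Coalgebra _ M C _ _ G.forget) :=
  ⟨Monoidal.induced G.forget Comonad.forgetInducingFunctorData,
    ⟨Monoidal.fromInducedMonoidal G.forget Comonad.forgetInducingFunctorData⟩⟩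
end

section
/- Let A be a *-autonomous monoidal category with equivalences S_ℓ ⊣ S_r and star constraint Hom(A ⊗ B, S_ℓ C) ≅ Hom(B ⊗ C, S_r A). Then A is (bi)closed, with left internal homs given by [B,C]_ℓ ≅ S_ℓ(B ⊗ S_r C) and right internal homs by [A,C]_r ≅ S_r(S_ℓ C ⊗ A); that is, Hom(A ⊗ B, C) ≅ Hom(A, S_ℓ(B ⊗ S_r C)) and Hom(B ⊗ A, C) ≅ Hom(A, S_r(S_ℓ C ⊗ B)) naturally. -/
open CategoryTheory MonoidalCategory

/-- A *-autonomous monoidal category (equivalence `Sₗ : A ≌ Aᵒᵖ` with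
pseudo-inverse `Sᵣ` and star constraint `Hom(A ⊗ B, Sₗ C) ≅ Hom(B ⊗ C, Sᵣ A)`) is
biclosed, with `[B,C]ₗ ≅ Sₗ(B ⊗ Sᵣ C)` and `[A,C]ᵣ ≅ Sᵣ(Sₗ C ⊗ A)`:
`Hom(A ⊗ B, C) ≅ Hom(A, Sₗ(B ⊗ Sᵣ C))` and `Hom(B ⊗ A, C) ≅ Hom(A, Sᵣ(Sₗ C ⊗ B))`
naturally in `A`. -/
theorem stmt_13 {A : Type*} [Category A] [MonoidalCategory A]
    (S : A ≌ Aᵒᵖ)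
    (c : ∀ X B C : A,
      (tensorObj X B ⟶ (S.functor.obj C).unop) ≃
        (tensorObj B C ⟶ S.inverse.obj (Opposite.op X)))
    (cnatX : ∀ {X X' : A} (f : X' ⟶ X) (B C : A)
      (g : tensorObj X B ⟶ (S.functor.obj C).unop),
      c X' B C (f ▷ B ≫ g) = c X B C g ≫ S.inverse.map f.op)
    (cnatC : ∀ (X B : A) {C C' : A} (f : C' ⟶ C)
      (g : tensorObj X B ⟶ (S.functor.obj C).unop),
      c X B C' (g ≫ (S.functor.map f).unop) = B ◁ f ≫ c X B C g) :
    (∀ B C : A,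
      ∃ h : ∀ X : A,
        (tensorObj X B ⟶ C) ≃
          (X ⟶ (S.functor.obj (tensorObj B (S.inverse.obj (Opposite.op C)))).unop),
        ∀ {X X' : A} (f : X' ⟶ X) (g : tensorObj X B ⟶ C),
          h X' (f ▷ B ≫ g) = f ≫ h X g) ∧
    (∀ B C : A,
      ∃ h : ∀ X : A,
        (tensorObj B X ⟶ C) ≃
          (X ⟶ S.inverse.obj (Opposite.op (tensorObj (S.functor.obj C).unop B))),
        ∀ {X X' : A} (f : X' ⟶ X) (g : tensorObj B X ⟶ C),
          h X' (B ◁ f ≫ g) = f ≫ h X g) := by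
  constructor
  · intro B C
    classical
    set R : A := S.inverse.obj (Opposite.op C) with hR
    set Y : A := tensorObj B R with hY
    -- `dE X : Hom(X, Sl Y) ≃ Hom(Y, Sr X)` via unitors and `c X 𝟙 Y`
    let dE : ∀ X : A, (X ⟶ (S.functor.obj Y).unop) ≃
        (Y ⟶ S.inverse.obj (Opposite.op X)) := fun X =>
      ((ρ_ X).symm.homCongr (Iso.refl _)).trans
        ((c X (𝟙_ A) Y).trans ((λ_ Y).homCongr (Iso.refl _)))
    have hd : ∀ {X X' : A} (f : X' ⟶ X) (u : X ⟶ (S.functor.obj Y).unop),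
        dE X' (f ≫ u) = dE X u ≫ S.inverse.map f.op := by
      intro X X' f u
      simp only [dE, Equiv.trans_apply, Iso.homCongr_apply, Iso.refl_hom,
        Iso.symm_inv, Category.comp_id]
      rw [show (ρ_ X').hom ≫ f ≫ u = f ▷ 𝟙_ A ≫ ((ρ_ X).hom ≫ u) by
        rw [← Category.assoc, ← Category.assoc, MonoidalCategory.rightUnitor_naturality],
        cnatX, Category.assoc]
    let e1 : ∀ X : A, (tensorObj X B ⟶ C) ≃ (tensorObj X B ⟶ (S.functor.obj R).unop) :=
      fun X => (Iso.refl _).homCongr (S.counitIso.app (Opposite.op C)).unop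
    refine ⟨fun X => ((e1 X).trans (c X B R)).trans (dE X).symm, ?_⟩
    intro X X' f g
    have h1 : e1 X' (f ▷ B ≫ g) = f ▷ B ≫ e1 X g := by
      simp [e1]
    have h2 : c X' B R (f ▷ B ≫ e1 X g) = c X B R (e1 X g) ≫ S.inverse.map f.op :=
      cnatX f B R (e1 X g)
    simp only [Equiv.trans_apply, h1, h2]
    rw [Equiv.symm_apply_eq, hd, Equiv.apply_symm_apply]
  · intro B C
    classical
    set D : A := (S.functor.obj C).unop with hD
    set P : A := tensorObj D B with hP
    let dE : ∀ X : A, (P ⟶ (S.functor.obj X).unop) ≃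
        (X ⟶ S.inverse.obj (Opposite.op P)) := fun X =>
      ((ρ_ P).symm.homCongr (Iso.refl _)).trans
        ((c P (𝟙_ A) X).trans ((λ_ X).homCongr (Iso.refl _)))
    have hd : ∀ {X X' : A} (f : X' ⟶ X) (v : P ⟶ (S.functor.obj X).unop),
        dE X' (v ≫ (S.functor.map f).unop) = f ≫ dE X v := by
      intro X X' f v
      simp only [dE, Equiv.trans_apply, Iso.homCongr_apply, Iso.refl_hom,
        Iso.symm_inv, Category.comp_id]
      rw [show (ρ_ P).hom ≫ v ≫ (S.functor.map f).unop
            = ((ρ_ P).hom ≫ v) ≫ (S.functor.map f).unop by rw [Category.assoc],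
        cnatC, ← Category.assoc, ← MonoidalCategory.leftUnitor_inv_naturality,
        Category.assoc]
    let e1 : ∀ X : A, (tensorObj B X ⟶ C) ≃
        (tensorObj B X ⟶ S.inverse.obj (Opposite.op D)) :=
      fun X => (Iso.refl _).homCongr (S.unitIso.app C)
    refine ⟨fun X => ((e1 X).trans (c D B X).symm).trans (dE X), ?_⟩
    intro X X' f g
    have h1 : e1 X' (B ◁ f ≫ g) = B ◁ f ≫ e1 X g := by
      simp [e1]
    have h2 : (c D B X').symm (B ◁ f ≫ e1 X g)
        = (c D B X).symm (e1 X g) ≫ (S.functor.map f).unop := by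
      rw [Equiv.symm_apply_eq, cnatC, Equiv.apply_symm_apply]
    simp only [Equiv.trans_apply, h1, h2, hd]
end

section
/- Let X be a set and (s,t) : A → X×X a graph. Then category structures on this graph correspond bijectively to monoidal comonad structures on the comonad Σ_{(s,t)}(s,t)* on Set/(X×X), with respect to the pullback-tensor monoidal structure on Set/(X×X). -/
open CategoryTheory MonoidalCategory

section Stmt15

/-- The pullback tensor product of two sets over `X × X`. -/
def grTensor {X : Type} (f g : Over ((X × X : Type))) : Over ((X × X : Type)) :=
  Over.mk (TypeCat.ofHom (show {p : f.left × g.left // (f.hom p.1).2 = (g.hom p.2).1} → X × X from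
    fun p => ((f.hom p.val.1).1, (g.hom p.val.2).2)))

/-- The property that `M` is the pullback-tensor monoidal structure on `Set/(X×X)`:
the tensor is given by pullback over the middle `X` and the unit is the diagonal. -/
def IsPullbackTensor (X : Type) (M : MonoidalCategory (Over ((X × X : Type)))) : Prop := by
  letI := M
  exact (∀ f g : Over ((X × X : Type)), f ⊗ g = grTensor f g) ∧
    𝟙_ (Over ((X × X : Type))) = Over.mk (TypeCat.ofHom (show X → X × X from fun x => (x, x)))

/-- A category structure on the graph `(s,t) : A → X × X`: identities and a
composition operation satisfying source/target compatibility, unit and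
associativity laws. -/
structure CatStr (X A : Type) (s t : A → X) where
  id : X → A
  s_id : ∀ x, s (id x) = x
  t_id : ∀ x, t (id x) = x
  comp : ∀ a b : A, t a = s b → A
  s_comp : ∀ a b h, s (comp a b h) = s a
  t_comp : ∀ a b h, t (comp a b h) = t b
  id_comp : ∀ a : A, comp (id (s a)) a (t_id (s a)) = a
  comp_id : ∀ a : A, comp a (id (t a)) (s_id (t a)).symm = a
  assoc : ∀ (a b c : A) (hab : t a = s b) (hbc : t b = s c),
    comp (comp a b hab) c ((t_comp a b hab).trans hbc) =
      comp a (comp b c hbc) (hab.trans (s_comp b c hbc).symm)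

/-- A monoidal comonad structure on an endofunctor `G` of a monoidal category:
a comonad structure `(ε, δ)`, a lax monoidal structure `(u, μ)`, such that the
counit and comultiplication are monoidal natural transformations. -/
structure MonoidalComonadStr {C : Type*} [Category C] [MonoidalCategory C]
    (G : C ⥤ C) where
  ε : G ⟶ 𝟭 C
  δ : G ⟶ G ⋙ G
  coassoc : ∀ X : C, δ.app X ≫ G.map (δ.app X) = δ.app X ≫ δ.app (G.obj X)
  left_counit : ∀ X : C, δ.app X ≫ ε.app (G.obj X) = 𝟙 (G.obj X)
  right_counit : ∀ X : C, δ.app X ≫ G.map (ε.app X) = 𝟙 (G.obj X)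
  u : 𝟙_ C ⟶ G.obj (𝟙_ C)
  μ : ∀ X Y : C, G.obj X ⊗ G.obj Y ⟶ G.obj (X ⊗ Y)
  μ_natural : ∀ {X Y X' Y' : C} (f : X ⟶ X') (g : Y ⟶ Y'),
    (G.map f ⊗ₘ G.map g) ≫ μ X' Y' = μ X Y ≫ G.map (f ⊗ₘ g)
  associativity : ∀ X Y Z : C,
    (μ X Y ▷ G.obj Z) ≫ μ (X ⊗ Y) Z ≫ G.map (α_ X Y Z).hom =
      (α_ (G.obj X) (G.obj Y) (G.obj Z)).hom ≫ (G.obj X ◁ μ Y Z) ≫ μ X (Y ⊗ Z)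
  left_unitality : ∀ X : C,
    (λ_ (G.obj X)).hom = (u ▷ G.obj X) ≫ μ (𝟙_ C) X ≫ G.map (λ_ X).hom
  right_unitality : ∀ X : C,
    (ρ_ (G.obj X)).hom = (G.obj X ◁ u) ≫ μ X (𝟙_ C) ≫ G.map (ρ_ X).hom
  ε_tensor : ∀ X Y : C, μ X Y ≫ ε.app (X ⊗ Y) = ε.app X ⊗ₘ ε.app Y
  ε_unit : u ≫ ε.app (𝟙_ C) = 𝟙 (𝟙_ C)
  δ_tensor : ∀ X Y : C, μ X Y ≫ δ.app (X ⊗ Y) =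
    (δ.app X ⊗ₘ δ.app Y) ≫ μ (G.obj X) (G.obj Y) ≫ G.map (μ X Y)
  δ_unit : u ≫ δ.app (𝟙_ C) = u ≫ G.map u

open Limits

namespace GrM

variable {X : Type}

lemma wcong {f g : Over ((X × X : Type))} (φ : f ⟶ g) (x : f.left) :
    g.hom (φ.left x) = f.hom x := ConcreteCategory.congr_hom (Over.w φ) x

def grHom {f f' g g' : Over ((X × X : Type))} (φ : f ⟶ f') (ψ : g ⟶ g') :
    grTensor f g ⟶ grTensor f' g' :=
  Over.homMk (TypeCat.ofHom fun p => ⟨(φ.left p.val.1, ψ.left p.val.2), by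
      rw [wcong φ, wcong ψ]; exact p.property⟩)
    (by
      refine ConcreteCategory.hom_ext _ _ fun p => ?_
      obtain ⟨⟨a, b⟩, hp⟩ := p
      change ((f'.hom (φ.left a)).1, (g'.hom (ψ.left b)).2) = ((f.hom a).1, (g.hom b).2)
      rw [wcong φ, wcong ψ])

@[simp] lemma grHom_left_apply {f f' g g' : Over ((X × X : Type))} (φ : f ⟶ f') (ψ : g ⟶ g')
    (p : (grTensor f g).left) :
    ((grHom φ ψ).left p).val = (φ.left p.val.1, ψ.left p.val.2) := rfl

abbrev M (X : Type) : MonoidalCategory (Over ((X × X : Type))) where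
  tensorObj := grTensor
  whiskerLeft f _ _ ψ := grHom (𝟙 f) ψ
  whiskerRight φ g := grHom φ (𝟙 g)
  tensorHom := grHom
  tensorUnit := Over.mk (TypeCat.ofHom (show X → X × X from fun x => (x, x)))
  associator f g h :=
    { hom := Over.homMk
        (TypeCat.ofHom fun p => ⟨(p.val.1.val.1, ⟨(p.val.1.val.2, p.val.2), p.property⟩),
          p.val.1.property⟩) rfl
      inv := Over.homMk
        (TypeCat.ofHom fun p => ⟨(⟨(p.val.1, p.val.2.val.1), p.property⟩, p.val.2.val.2),
          p.val.2.property⟩) rfl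
      hom_inv_id := rfl
      inv_hom_id := rfl }
  leftUnitor f :=
    { hom := Over.homMk (TypeCat.ofHom fun p => p.val.2)
        (by refine ConcreteCategory.hom_ext _ _ fun p => ?_; exact Prod.ext p.property.symm rfl)
      inv := Over.homMk (TypeCat.ofHom fun y => ⟨((f.hom y).1, y), rfl⟩) rfl
      hom_inv_id := by
        apply Over.OverMorphism.ext; refine ConcreteCategory.hom_ext _ _ fun p => ?_
        exact Subtype.ext (Prod.ext p.property.symm rfl)
      inv_hom_id := rfl }
  rightUnitor f :=
    { hom := Over.homMk (TypeCat.ofHom fun p => p.val.1)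
        (by refine ConcreteCategory.hom_ext _ _ fun p => ?_; exact Prod.ext rfl p.property)
      inv := Over.homMk (TypeCat.ofHom fun y => ⟨(y, (f.hom y).2), rfl⟩) rfl
      hom_inv_id := by
        apply Over.OverMorphism.ext; refine ConcreteCategory.hom_ext _ _ fun p => ?_
        exact Subtype.ext (Prod.ext rfl p.property)
      inv_hom_id := rfl }
  tensorHom_def _ _ := rfl
  id_tensorHom_id _ _ := rfl
  tensorHom_comp_tensorHom _ _ _ _ := rfl
  whiskerLeft_id _ _ := rfl
  id_whiskerRight _ _ := rfl
  associator_naturality _ _ _ := rfl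
  leftUnitor_naturality _ := rfl
  rightUnitor_naturality _ := rfl
  pentagon _ _ _ _ := rfl
  triangle _ _ := rfl

section API

variable {A : Type} {u : A → (X × X)}

/-- the comonad endofunctor -/
noncomputable def Gf (u : A → (X × X)) : Over ((X × X : Type)) ⥤ Over ((X × X : Type)) :=
  Over.pullback (TypeCat.ofHom u) ⋙ Over.map (TypeCat.ofHom u)

lemma Gf_map_fst' {f g : Over ((X × X : Type))} (φ : f ⟶ g)
    (z : Limits.pullback (C := Type) f.hom (TypeCat.ofHom u)) :
    pullback.fst (C := Type) g.hom (TypeCat.ofHom u) (((Gf u).map φ).left z) =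
      φ.left (pullback.fst (C := Type) f.hom (TypeCat.ofHom u) z) :=
  ConcreteCategory.congr_hom (pullback.lift_fst (C := Type) _ _ _) z

lemma Gf_map_snd' {f g : Over ((X × X : Type))} (φ : f ⟶ g)
    (z : Limits.pullback (C := Type) f.hom (TypeCat.ofHom u)) :
    pullback.snd (C := Type) g.hom (TypeCat.ofHom u) (((Gf u).map φ).left z) =
      pullback.snd (C := Type) f.hom (TypeCat.ofHom u) z :=
  ConcreteCategory.congr_hom (pullback.lift_snd (C := Type) _ _ _) z

lemma cla {f g h : Over ((X × X : Type))} (φ : f ⟶ g) (ψ : g ⟶ h) (z : f.left) :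
    (φ ≫ ψ).left z = ψ.left (φ.left z) := rfl

lemma Gobj_hom (f : Over ((X × X : Type))) (z : ((Gf u).obj f).left) :
    ((Gf u).obj f).hom z = u (pullback.snd (C := Type) f.hom (TypeCat.ofHom u) z) := rfl

lemma Gf_map_fst {f g : Over ((X × X : Type))} (φ : f ⟶ g) (z : ((Gf u).obj f).left) :
    pullback.fst (C := Type) g.hom (TypeCat.ofHom u) (((Gf u).map φ).left z) =
      φ.left (pullback.fst (C := Type) f.hom (TypeCat.ofHom u) z) :=
  ConcreteCategory.congr_hom (pullback.lift_fst (C := Type) _ _ _) z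

lemma Gf_map_snd {f g : Over ((X × X : Type))} (φ : f ⟶ g) (z : ((Gf u).obj f).left) :
    pullback.snd (C := Type) g.hom (TypeCat.ofHom u) (((Gf u).map φ).left z) =
      pullback.snd (C := Type) f.hom (TypeCat.ofHom u) z :=
  ConcreteCategory.congr_hom (pullback.lift_snd (C := Type) _ _ _) z

/-- element constructor for pullbacks along `u` -/
noncomputable def Gmk {W : Type} (v : W ⟶ X × X) (x : W) (a : A) (h : v x = u a) :
    Limits.pullback (C := Type) (X := W) (Y := A) (Z := X × X) v (TypeCat.ofHom u) :=
  (Limits.Types.pullbackIsoPullback (X := W) (Y := A) (Z := X × X) v (TypeCat.ofHom u)).inv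
    ⟨(x, a), h⟩

@[simp] lemma Gmk_fst {W : Type} (v : W ⟶ X × X) (x : W) (a : A) (h : v x = u a) :
    pullback.fst (C := Type) (X := W) (Y := A) (Z := X × X) v (TypeCat.ofHom u) (Gmk v x a h) = x := by
  exact Limits.Types.pullbackIsoPullback_inv_fst_apply v (TypeCat.ofHom u) ⟨(x, a), h⟩


@[simp] lemma Gmk_snd {W : Type} (v : W ⟶ X × X) (x : W) (a : A) (h : v x = u a) :
    pullback.snd (C := Type) (X := W) (Y := A) (Z := X × X) v (TypeCat.ofHom u) (Gmk v x a h) = a := by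
  exact Limits.Types.pullbackIsoPullback_inv_snd_apply v (TypeCat.ofHom u) ⟨(x, a), h⟩

/-- element constructor for `G f` -/
noncomputable def GmkG (F : Over ((X × X : Type))) (x : F.left) (a : A) (h : F.hom x = u a) :
    ((Gf u).obj F).left :=
  Gmk F.hom x a h

@[simp] lemma GmkG_fst (F : Over ((X × X : Type))) (x : F.left) (a : A) (h : F.hom x = u a) :
    pullback.fst (C := Type) F.hom (TypeCat.ofHom u) (GmkG F x a h) = x :=
  Gmk_fst _ _ _ _

@[simp] lemma GmkG_snd (F : Over ((X × X : Type))) (x : F.left) (a : A) (h : F.hom x = u a) :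
    pullback.snd (C := Type) F.hom (TypeCat.ofHom u) (GmkG F x a h) = a :=
  Gmk_snd _ _ _ _

@[simp] lemma lift_fst_apply {W T : Type} (v : W ⟶ X × X) (k : T ⟶ W) (h : T ⟶ A)
    (w) (z : T) :
    pullback.fst (C := Type) (X := W) (Y := A) (Z := X × X) v (TypeCat.ofHom u)
      (pullback.lift (C := Type) (W := T) k h w z) = k z := by
  exact ConcreteCategory.congr_hom (pullback.lift_fst (C := Type) (W := T) k h w) z

@[simp] lemma lift_snd_apply {W T : Type} (v : W ⟶ X × X) (k : T ⟶ W) (h : T ⟶ A)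
    (w) (z : T) :
    pullback.snd (C := Type) (X := W) (Y := A) (Z := X × X) v (TypeCat.ofHom u)
      (pullback.lift (C := Type) (W := T) k h w z) = h z := by
  exact ConcreteCategory.congr_hom (pullback.lift_snd (C := Type) (W := T) k h w) z

lemma Gext {W : Type} {v : W ⟶ X × X}
    {z w : Limits.pullback (C := Type) (X := W) (Y := A) (Z := X × X) v (TypeCat.ofHom u)}
    (h1 : pullback.fst (C := Type) (X := W) (Y := A) (Z := X × X) v (TypeCat.ofHom u) z =
          pullback.fst (C := Type) (X := W) (Y := A) (Z := X × X) v (TypeCat.ofHom u) w)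
    (h2 : pullback.snd (C := Type) (X := W) (Y := A) (Z := X × X) v (TypeCat.ofHom u) z =
          pullback.snd (C := Type) (X := W) (Y := A) (Z := X × X) v (TypeCat.ofHom u) w) : z = w :=
  Limits.PullbackCone.IsLimit.type_ext
    (Limits.pullbackIsPullback (C := Type) (X := W) (Y := A) (Z := X × X) v (TypeCat.ofHom u)) h1 h2

lemma GextG {f : Over ((X × X : Type))} {z w : ((Gf u).obj f).left}
    (h1 : pullback.fst (C := Type) f.hom (TypeCat.ofHom u) z =
      pullback.fst (C := Type) f.hom (TypeCat.ofHom u) w)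
    (h2 : pullback.snd (C := Type) f.hom (TypeCat.ofHom u) z =
      pullback.snd (C := Type) f.hom (TypeCat.ofHom u) w) :
    z = w := Gext h1 h2

lemma Gcond {W : Type} {v : W ⟶ X × X}
    (z : Limits.pullback (C := Type) (X := W) (Y := A) (Z := X × X) v (TypeCat.ofHom u)) :
    v (pullback.fst (C := Type) (X := W) (Y := A) (Z := X × X) v (TypeCat.ofHom u) z) =
      u (pullback.snd (C := Type) (X := W) (Y := A) (Z := X × X) v (TypeCat.ofHom u) z) :=
  ConcreteCategory.congr_hom (pullback.condition (C := Type) (X := W) (Y := A) (Z := X × X) (f := v) (g := TypeCat.ofHom u)) z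

end API

end GrM



namespace GrM

attribute [local instance] GrM.M

section Forward

variable {X A : Type} (s t : A → X)

abbrev gr : A → X × X := fun a => (s a, t a)

/-- sugar for pullback projections -/
noncomputable abbrev Pfst {A : Type} {u : A → X × X} {W : Type} (v : W ⟶ X × X)
    (z : Limits.pullback (C := Type) (X := W) (Y := A) (Z := X × X) v (TypeCat.ofHom u)) : W :=
  pullback.fst (C := Type) (X := W) (Y := A) (Z := X × X) v (TypeCat.ofHom u) z

noncomputable abbrev Psnd {A : Type} {u : A → X × X} {W : Type} (v : W ⟶ X × X)
    (z : Limits.pullback (C := Type) (X := W) (Y := A) (Z := X × X) v (TypeCat.ofHom u)) : A :=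
  pullback.snd (C := Type) (X := W) (Y := A) (Z := X × X) v (TypeCat.ofHom u) z

variable {s t} (c : CatStr X A s t)

/-- the counit -/
noncomputable def εc : Gf (gr s t) ⟶ 𝟭 (Over ((X × X : Type))) where
  app f := Over.homMk (TypeCat.ofHom fun z => Pfst f.hom z) (by refine ConcreteCategory.hom_ext _ _ fun z => ?_; exact Gcond z)
  naturality f g φ := by
    apply Over.OverMorphism.ext; refine ConcreteCategory.hom_ext _ _ fun z => ?_
    exact lift_fst_apply g.hom _ _ _ z

@[simp] lemma εc_left (f : Over ((X × X : Type))) (z : ((Gf (gr s t)).obj f).left) :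
    ((εc (s := s) (t := t)).app f).left z = Pfst f.hom z := rfl

lemma εc_left' (f : Over ((X × X : Type))) (z : ((Gf (gr s t)).obj f).left) :
    (Over.Hom.left (g := f) ((εc (s := s) (t := t)).app f)) z = Pfst f.hom z := rfl

lemma εc_left'' (f : Over ((X × X : Type)))
    (z : Limits.pullback (C := Type) f.hom (TypeCat.ofHom (gr s t))) :
    (Over.Hom.left (g := f) ((εc (s := s) (t := t)).app f)) z = Pfst f.hom z := rfl

/-- the comultiplication -/
noncomputable def δc : Gf (gr s t) ⟶ Gf (gr s t) ⋙ Gf (gr s t) where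
  app f := Over.homMk
    (TypeCat.ofHom fun z => GmkG (u := gr s t) ((Gf (gr s t)).obj f) z (Psnd f.hom z) (Gobj_hom f z))
    (by refine ConcreteCategory.hom_ext _ _ fun z => ?_; exact congrArg (gr s t) (GmkG_snd _ _ _ _))
  naturality f g φ := by
    apply Over.OverMorphism.ext; refine ConcreteCategory.hom_ext _ _ fun z => ?_
    dsimp only [Functor.comp_obj, Functor.comp_map]
    refine GextG (f := (Gf (gr s t)).obj g) (GextG ?_ ?_) ?_ <;>
      simp only [cla, Over.homMk_left, TypeCat.hom_ofHom, ConcreteCategory.hom_ofHom, TypeCat.Fun.coe_mk, TypeCat.ofHom_apply, GmkG_fst, GmkG_snd, Gf_map_fst, Gf_map_snd, Gf_map_fst', Gf_map_snd']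

@[simp] lemma δc_left (f : Over ((X × X : Type))) (z : ((Gf (gr s t)).obj f).left) :
    ((δc (s := s) (t := t)).app f).left z =
      GmkG (u := gr s t) ((Gf (gr s t)).obj f) z (Psnd f.hom z) (Gobj_hom f z) := rfl

lemma δc_left' (f : Over ((X × X : Type))) (z : ((Gf (gr s t)).obj f).left) :
    (Over.Hom.left (g := (Gf (gr s t)).obj ((Gf (gr s t)).obj f)) ((δc (s := s) (t := t)).app f)) z =
      GmkG (u := gr s t) ((Gf (gr s t)).obj f) z (Psnd f.hom z) (Gobj_hom f z) := rfl

lemma δc_left'' (f : Over ((X × X : Type)))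
    (z : Limits.pullback (C := Type) f.hom (TypeCat.ofHom (gr s t))) :
    (Over.Hom.left (g := (Gf (gr s t)).obj ((Gf (gr s t)).obj f)) ((δc (s := s) (t := t)).app f)) z =
      GmkG (u := gr s t) ((Gf (gr s t)).obj f) z (Psnd f.hom z) (Gobj_hom f z) := rfl

end Forward

end GrM

namespace GrM

attribute [local instance] GrM.M

section Forward2

variable {X A : Type} {s t : A → X} (c : CatStr X A s t)

/-- the unit -/
noncomputable def uc : (𝟙_ (Over ((X × X : Type)))) ⟶ (Gf (gr s t)).obj (𝟙_ _) :=
  Over.homMk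
    (TypeCat.ofHom fun x => GmkG (u := gr s t) (𝟙_ (Over ((X × X : Type)))) x (c.id x)
      (Prod.ext (c.s_id x).symm (c.t_id x).symm))
    (by
      refine ConcreteCategory.hom_ext _ _ fun x => ?_
      exact (congrArg (gr s t) (GmkG_snd _ _ _ _)).trans
        (Prod.ext (c.s_id x) (c.t_id x)))

@[simp] lemma uc_left (x : X) :
    (uc c).left x = GmkG (u := gr s t) (𝟙_ (Over ((X × X : Type)))) x (c.id x)
      (Prod.ext (c.s_id x).symm (c.t_id x).symm) := rfl

lemma hmid {f g : Over ((X × X : Type))}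
    (p : (((Gf (gr s t)).obj f ⊗ (Gf (gr s t)).obj g : Over ((X × X : Type)))).left) :
    (f.hom (Pfst f.hom p.val.1)).2 = (g.hom (Pfst g.hom p.val.2)).1 := by
  rw [Gcond p.val.1, Gcond p.val.2]; exact p.property

lemma hcmp {f g : Over ((X × X : Type))}
    (p : (((Gf (gr s t)).obj f ⊗ (Gf (gr s t)).obj g : Over ((X × X : Type)))).left) :
    t (Psnd f.hom p.val.1) = s (Psnd g.hom p.val.2) := p.property

/-- an element of the pullback tensor -/
abbrev mkT (f g : Over ((X × X : Type))) (a : f.left) (b : g.left)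
    (h : (f.hom a).2 = (g.hom b).1) : (f ⊗ g : Over ((X × X : Type))).left :=
  ⟨(a, b), h⟩

/-- the lax structure map -/
noncomputable def μc (f g : Over ((X × X : Type))) :
    ((Gf (gr s t)).obj f ⊗ (Gf (gr s t)).obj g : Over ((X × X : Type))) ⟶ (Gf (gr s t)).obj (f ⊗ g) :=
  Over.homMk
    (TypeCat.ofHom fun p => GmkG (u := gr s t) (f ⊗ g)
      (mkT f g (Pfst f.hom p.val.1) (Pfst g.hom p.val.2) (hmid p))
      (c.comp (Psnd f.hom p.val.1) (Psnd g.hom p.val.2) (hcmp p))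
      (by
        refine Prod.ext ?_ ?_
        · show (f.hom (Pfst f.hom p.val.1)).1 = s _
          rw [Gcond p.val.1, c.s_comp]
        · show (g.hom (Pfst g.hom p.val.2)).2 = t _
          rw [Gcond p.val.2, c.t_comp]))
    (by
      refine ConcreteCategory.hom_ext _ _ fun p => ?_
      refine Prod.ext ?_ ?_
      · exact (congrArg s (GmkG_snd _ _ _ _)).trans (c.s_comp _ _ _)
      · exact (congrArg t (GmkG_snd _ _ _ _)).trans (c.t_comp _ _ _))

@[simp] lemma μc_left (f g : Over ((X × X : Type)))
    (p : (((Gf (gr s t)).obj f ⊗ (Gf (gr s t)).obj g : Over ((X × X : Type)))).left) :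
    (μc c f g).left p = GmkG (u := gr s t) (f ⊗ g)
      (mkT f g (Pfst f.hom p.val.1) (Pfst g.hom p.val.2) (hmid p))
      (c.comp (Psnd f.hom p.val.1) (Psnd g.hom p.val.2) (hcmp p))
      (by
        refine Prod.ext ?_ ?_
        · show (f.hom (Pfst f.hom p.val.1)).1 = s _
          rw [Gcond p.val.1, c.s_comp]
        · show (g.hom (Pfst g.hom p.val.2)).2 = t _
          rw [Gcond p.val.2, c.t_comp]) := rfl

end Forward2

end GrM

namespace GrM

attribute [local instance] GrM.M

section Axioms

variable {X A : Type} {s t : A → X} (c : CatStr X A s t)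

@[simp] lemma associator_hom_left_apply (f g h : Over ((X × X : Type)))
    (p : (grTensor (grTensor f g) h).left) :
    (((α_ f g h).hom.left p).val : f.left × (grTensor g h).left) =
      (p.val.1.val.1, ⟨(p.val.1.val.2, p.val.2), p.property⟩) := rfl

@[simp] lemma leftUnitor_hom_left_apply (f : Over ((X × X : Type)))
    (p : (grTensor (𝟙_ (Over ((X × X : Type)))) f).left) :
    ((λ_ f).hom.left p) = p.val.2 := rfl

@[simp] lemma rightUnitor_hom_left_apply (f : Over ((X × X : Type)))
    (p : (grTensor f (𝟙_ (Over ((X × X : Type))))).left) :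
    ((ρ_ f).hom.left p) = p.val.1 := rfl

@[simp] lemma unit_hom_apply (x : X) :
    (𝟙_ (Over ((X × X : Type)))).hom x = (x, x) := rfl

@[simp] lemma tensorHom_eq {f f' g g' : Over ((X × X : Type))} (φ : f ⟶ f') (ψ : g ⟶ g') :
    φ ⊗ₘ ψ = grHom φ ψ := rfl

@[simp] lemma whiskerLeft_eq (f : Over ((X × X : Type))) {g g' : Over ((X × X : Type))}
    (ψ : g ⟶ g') : f ◁ ψ = grHom (𝟙 f) ψ := rfl

@[simp] lemma whiskerRight_eq {f f' : Over ((X × X : Type))} (φ : f ⟶ f')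
    (g : Over ((X × X : Type))) : φ ▷ g = grHom φ (𝟙 g) := rfl

lemma associator_hom_left_apply' (f g h : Over ((X × X : Type)))
    (p : ((f ⊗ g) ⊗ h : Over ((X × X : Type))).left) :
    ((α_ f g h).hom.left p).val = (p.val.1.val.1, mkT g h p.val.1.val.2 p.val.2 p.property) := rfl

lemma leftUnitor_hom_left_apply' (f : Over ((X × X : Type)))
    (p : (𝟙_ (Over ((X × X : Type))) ⊗ f : Over ((X × X : Type))).left) :
    ((λ_ f).hom.left p) = p.val.2 := rfl

lemma rightUnitor_hom_left_apply' (f : Over ((X × X : Type)))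
    (p : (f ⊗ 𝟙_ (Over ((X × X : Type))) : Over ((X × X : Type))).left) :
    ((ρ_ f).hom.left p) = p.val.1 := rfl

lemma tensorHom_left_apply {f f' g g' : Over ((X × X : Type))} (φ : f ⟶ f') (ψ : g ⟶ g')
    (p : (f ⊗ g : Over ((X × X : Type))).left) :
    ((φ ⊗ₘ ψ).left p).val = (φ.left p.val.1, ψ.left p.val.2) := rfl

lemma whiskerLeft_left_apply (f : Over ((X × X : Type))) {g g' : Over ((X × X : Type))}
    (ψ : g ⟶ g') (p : (f ⊗ g : Over ((X × X : Type))).left) :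
    ((f ◁ ψ).left p).val = (p.val.1, ψ.left p.val.2) := rfl

lemma whiskerRight_left_apply {f f' : Over ((X × X : Type))} (φ : f ⟶ f')
    (g : Over ((X × X : Type))) (p : (f ⊗ g : Over ((X × X : Type))).left) :
    ((φ ▷ g).left p).val = (φ.left p.val.1, p.val.2) := rfl

@[simp] lemma id_left_apply {f : Over ((X × X : Type))} (z : f.left) :
    (𝟙 f : f ⟶ f).left z = z := rfl

@[simp] lemma comp_left_apply {f g h : Over ((X × X : Type))} (φ : f ⟶ g) (ψ : g ⟶ h)
    (z : f.left) : (φ ≫ ψ).left z = ψ.left (φ.left z) := rfl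

lemma _root_.CatStr.id_comp' {s t : A → X} (c : CatStr X A s t) (a : A) (x : X)
    (hx : x = s a) (h : t (c.id x) = s a) : c.comp (c.id x) a h = a := by
  subst hx; exact c.id_comp a

lemma _root_.CatStr.comp_id' {s t : A → X} (c : CatStr X A s t) (a : A) (x : X)
    (hx : x = t a) (h : t a = s (c.id x)) : c.comp a (c.id x) h = a := by
  subst hx; exact c.comp_id a

set_option maxHeartbeats 1000000 in
noncomputable def toMon : @MonoidalComonadStr (Over ((X × X : Type))) _ (M X)
    (Gf (gr s t)) where
  ε := εc
  δ := δc
  coassoc f := by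
    apply Over.OverMorphism.ext; refine ConcreteCategory.hom_ext _ _ fun z => ?_
    dsimp only [Functor.comp_obj]
    refine GextG (GextG ?_ ?_) ?_ <;> simp only [comp_left_apply, id_left_apply, tensorHom_left_apply, whiskerLeft_left_apply, whiskerRight_left_apply, associator_hom_left_apply', leftUnitor_hom_left_apply', rightUnitor_hom_left_apply', unit_hom_apply, εc_left', εc_left'', δc_left', δc_left'', uc_left, μc_left, Gmk_fst, Gmk_snd, GmkG_fst, GmkG_snd, Gf_map_fst, Gf_map_snd, Gf_map_fst', Gf_map_snd']
  left_counit f := by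
    apply Over.OverMorphism.ext; refine ConcreteCategory.hom_ext _ _ fun z => ?_
    dsimp only [Functor.comp_obj]
    simp only [comp_left_apply, id_left_apply, tensorHom_left_apply, whiskerLeft_left_apply, whiskerRight_left_apply, associator_hom_left_apply', leftUnitor_hom_left_apply', rightUnitor_hom_left_apply', unit_hom_apply, εc_left', εc_left'', δc_left', δc_left'', uc_left, μc_left, Gmk_fst, Gmk_snd, GmkG_fst, GmkG_snd, Gf_map_fst, Gf_map_snd, Gf_map_fst', Gf_map_snd']
  right_counit f := by
    apply Over.OverMorphism.ext; refine ConcreteCategory.hom_ext _ _ fun z => ?_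
    dsimp only [Functor.comp_obj, Functor.id_obj]
    refine GextG ?_ ?_ <;> simp only [comp_left_apply, id_left_apply, tensorHom_left_apply, whiskerLeft_left_apply, whiskerRight_left_apply, associator_hom_left_apply', leftUnitor_hom_left_apply', rightUnitor_hom_left_apply', unit_hom_apply, εc_left', εc_left'', δc_left', δc_left'', uc_left, μc_left, Gmk_fst, Gmk_snd, GmkG_fst, GmkG_snd, Gf_map_fst, Gf_map_snd, Gf_map_fst', Gf_map_snd']
  u := uc c
  μ := μc c
  μ_natural {f g f' g'} φ ψ := by
    apply Over.OverMorphism.ext; refine ConcreteCategory.hom_ext _ _ fun p => ?_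
    refine GextG (Subtype.ext ?_) ?_ <;> simp only [comp_left_apply, id_left_apply, tensorHom_left_apply, whiskerLeft_left_apply, whiskerRight_left_apply, associator_hom_left_apply', leftUnitor_hom_left_apply', rightUnitor_hom_left_apply', unit_hom_apply, εc_left', εc_left'', δc_left', δc_left'', uc_left, μc_left, Gmk_fst, Gmk_snd, GmkG_fst, GmkG_snd, Gf_map_fst, Gf_map_snd, Gf_map_fst', Gf_map_snd']
  associativity f g h := by
    apply Over.OverMorphism.ext; refine ConcreteCategory.hom_ext _ _ fun p => ?_
    refine GextG (Subtype.ext ?_) ?_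
    · simp only [comp_left_apply, id_left_apply, tensorHom_left_apply, whiskerLeft_left_apply, whiskerRight_left_apply, associator_hom_left_apply', leftUnitor_hom_left_apply', rightUnitor_hom_left_apply', unit_hom_apply, εc_left', εc_left'', δc_left', δc_left'', uc_left, μc_left, Gmk_fst, Gmk_snd, GmkG_fst, GmkG_snd, Gf_map_fst, Gf_map_snd, Gf_map_fst', Gf_map_snd']
    · simp only [comp_left_apply, id_left_apply, tensorHom_left_apply, whiskerLeft_left_apply, whiskerRight_left_apply, associator_hom_left_apply', leftUnitor_hom_left_apply', rightUnitor_hom_left_apply', unit_hom_apply, εc_left', εc_left'', δc_left', δc_left'', uc_left, μc_left, Gmk_fst, Gmk_snd, GmkG_fst, GmkG_snd, Gf_map_fst, Gf_map_snd, Gf_map_fst', Gf_map_snd']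
      exact c.assoc _ _ _ _ _
  left_unitality f := by
    apply Over.OverMorphism.ext; refine ConcreteCategory.hom_ext _ _ fun p => ?_
    refine (GextG ?_ ?_).symm
    · simp only [comp_left_apply, id_left_apply, tensorHom_left_apply, whiskerLeft_left_apply, whiskerRight_left_apply, associator_hom_left_apply', leftUnitor_hom_left_apply', rightUnitor_hom_left_apply', unit_hom_apply, εc_left', εc_left'', δc_left', δc_left'', uc_left, μc_left, Gmk_fst, Gmk_snd, GmkG_fst, GmkG_snd, Gf_map_fst, Gf_map_snd, Gf_map_fst', Gf_map_snd']
    · simp only [comp_left_apply, id_left_apply, tensorHom_left_apply, whiskerLeft_left_apply, whiskerRight_left_apply, associator_hom_left_apply', leftUnitor_hom_left_apply', rightUnitor_hom_left_apply', unit_hom_apply, εc_left', εc_left'', δc_left', δc_left'', uc_left, μc_left, Gmk_fst, Gmk_snd, GmkG_fst, GmkG_snd, Gf_map_fst, Gf_map_snd, Gf_map_fst', Gf_map_snd']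
      exact c.id_comp' _ _ p.property _
  right_unitality f := by
    apply Over.OverMorphism.ext; refine ConcreteCategory.hom_ext _ _ fun p => ?_
    refine (GextG ?_ ?_).symm
    · simp only [comp_left_apply, id_left_apply, tensorHom_left_apply, whiskerLeft_left_apply, whiskerRight_left_apply, associator_hom_left_apply', leftUnitor_hom_left_apply', rightUnitor_hom_left_apply', unit_hom_apply, εc_left', εc_left'', δc_left', δc_left'', uc_left, μc_left, Gmk_fst, Gmk_snd, GmkG_fst, GmkG_snd, Gf_map_fst, Gf_map_snd, Gf_map_fst', Gf_map_snd']
    · simp only [comp_left_apply, id_left_apply, tensorHom_left_apply, whiskerLeft_left_apply, whiskerRight_left_apply, associator_hom_left_apply', leftUnitor_hom_left_apply', rightUnitor_hom_left_apply', unit_hom_apply, εc_left', εc_left'', δc_left', δc_left'', uc_left, μc_left, Gmk_fst, Gmk_snd, GmkG_fst, GmkG_snd, Gf_map_fst, Gf_map_snd, Gf_map_fst', Gf_map_snd']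
      exact c.comp_id' _ _ p.property.symm _
  ε_tensor f g := by
    apply Over.OverMorphism.ext; refine ConcreteCategory.hom_ext _ _ fun p => ?_
    dsimp only [Functor.id_obj]
    apply Subtype.ext; simp only [comp_left_apply, id_left_apply, tensorHom_left_apply, whiskerLeft_left_apply, whiskerRight_left_apply, associator_hom_left_apply', leftUnitor_hom_left_apply', rightUnitor_hom_left_apply', unit_hom_apply, εc_left', εc_left'', δc_left', δc_left'', uc_left, μc_left, Gmk_fst, Gmk_snd, GmkG_fst, GmkG_snd, Gf_map_fst, Gf_map_snd, Gf_map_fst', Gf_map_snd']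
  ε_unit := by
    apply Over.OverMorphism.ext; refine ConcreteCategory.hom_ext _ _ fun x => ?_
    dsimp only [Functor.id_obj]
    simp only [comp_left_apply, id_left_apply, tensorHom_left_apply, whiskerLeft_left_apply, whiskerRight_left_apply, associator_hom_left_apply', leftUnitor_hom_left_apply', rightUnitor_hom_left_apply', unit_hom_apply, εc_left', εc_left'', δc_left', δc_left'', uc_left, μc_left, Gmk_fst, Gmk_snd, GmkG_fst, GmkG_snd, Gf_map_fst, Gf_map_snd, Gf_map_fst', Gf_map_snd']
  δ_tensor f g := by
    apply Over.OverMorphism.ext; refine ConcreteCategory.hom_ext _ _ fun p => ?_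
    dsimp only [Functor.comp_obj]
    refine GextG (GextG (Subtype.ext ?_) ?_) ?_ <;> simp only [comp_left_apply, id_left_apply, tensorHom_left_apply, whiskerLeft_left_apply, whiskerRight_left_apply, associator_hom_left_apply', leftUnitor_hom_left_apply', rightUnitor_hom_left_apply', unit_hom_apply, εc_left', εc_left'', δc_left', δc_left'', uc_left, μc_left, Gmk_fst, Gmk_snd, GmkG_fst, GmkG_snd, Gf_map_fst, Gf_map_snd, Gf_map_fst', Gf_map_snd']
  δ_unit := by
    apply Over.OverMorphism.ext; refine ConcreteCategory.hom_ext _ _ fun x => ?_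
    dsimp only [Functor.comp_obj]
    refine GextG (GextG ?_ ?_) ?_ <;> simp only [comp_left_apply, id_left_apply, tensorHom_left_apply, whiskerLeft_left_apply, whiskerRight_left_apply, associator_hom_left_apply', leftUnitor_hom_left_apply', rightUnitor_hom_left_apply', unit_hom_apply, εc_left', εc_left'', δc_left', δc_left'', uc_left, μc_left, Gmk_fst, Gmk_snd, GmkG_fst, GmkG_snd, Gf_map_fst, Gf_map_snd, Gf_map_fst', Gf_map_snd']

end Axioms

end GrM

namespace GrM

attribute [local instance] GrM.M

section Backward

variable {X A : Type} {s t : A → X}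

/-- the graph itself as an object over `X × X` -/
def Om (s t : A → X) : Over ((X × X : Type)) := Over.mk (TypeCat.ofHom (gr s t))

lemma Om_hom (s t : A → X) (a : A) : (Om s t).hom a = gr s t a := rfl

/-- the generic element of `G Ω` -/
noncomputable def jA (s t : A → X) (a : A) : ((Gf (gr s t)).obj (Om s t)).left :=
  Gmk (u := gr s t) (Om s t).hom a a (Om_hom s t a)

@[simp] lemma jA_fst (a : A) :
    pullback.fst (C := Type) (X := (Om s t).left) (Y := A) (Z := X × X)
      (Om s t).hom (TypeCat.ofHom (gr s t)) (jA s t a) = a := Gmk_fst _ _ _ _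

@[simp] lemma jA_snd (a : A) :
    pullback.snd (C := Type) (X := (Om s t).left) (Y := A) (Z := X × X)
      (Om s t).hom (TypeCat.ofHom (gr s t)) (jA s t a) = a := Gmk_snd _ _ _ _

variable (m : @MonoidalComonadStr (Over ((X × X : Type))) _ (M X) (Gf (gr s t)))

/-- the extracted identities -/
noncomputable def mid (x : X) : A := Psnd (𝟙_ (Over ((X × X : Type)))).hom (m.u.left x)

lemma mid_s (x : X) : s (mid m x) = x := by
  have h := congrArg Prod.fst (ConcreteCategory.congr_hom (Over.w m.u) x); exact h

lemma mid_t (x : X) : t (mid m x) = x := by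
  have h := congrArg Prod.snd (ConcreteCategory.congr_hom (Over.w m.u) x); exact h

lemma jcond (a b : A) (h : t a = s b) :
    (((Gf (gr s t)).obj (Om s t)).hom (jA s t a)).2 =
      (((Gf (gr s t)).obj (Om s t)).hom (jA s t b)).1 := by
  exact ((congrArg t (jA_snd a)).trans h).trans (congrArg s (jA_snd b)).symm

/-- the generic composable pair -/
noncomputable def jP (a b : A) (h : t a = s b) :
    (((Gf (gr s t)).obj (Om s t) ⊗ (Gf (gr s t)).obj (Om s t)) : Over ((X × X : Type))).left :=
  ⟨(jA s t a, jA s t b), jcond a b h⟩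

/-- the extracted composition -/
noncomputable def mcomp (a b : A) (h : t a = s b) : A :=
  Psnd (Om s t ⊗ Om s t).hom ((m.μ (Om s t) (Om s t)).left (jP a b h))

lemma mcomp_st (a b : A) (h : t a = s b) :
    gr s t (mcomp m a b h) = (s a, t b) := by
  have w := ConcreteCategory.congr_hom (Over.w (m.μ (Om s t) (Om s t))) (jP a b h)
  refine Eq.trans ?_ (w.trans ?_)
  · rfl
  · exact Prod.ext (congrArg s (jA_snd a)) (congrArg t (jA_snd b))

lemma mcomp_s (a b : A) (h : t a = s b) : s (mcomp m a b h) = s a :=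
  congrArg Prod.fst (mcomp_st m a b h)

lemma mcomp_t (a b : A) (h : t a = s b) : t (mcomp m a b h) = t b :=
  congrArg Prod.snd (mcomp_st m a b h)

lemma mcomp_congr {a a' b b' : A} (ha : a = a') (hb : b = b') (h : t a = s b)
    (h' : t a' = s b') : mcomp m a b h = mcomp m a' b' h' := by
  subst ha; subst hb; rfl

end Backward

end GrM

namespace GrM

attribute [local instance] GrM.M

section Forced

variable {X A : Type} {s t : A → X}
variable (m : @MonoidalComonadStr (Over ((X × X : Type))) _ (M X) (Gf (gr s t)))

/-- the counit is forced -/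
lemma eps_forced (f : Over ((X × X : Type))) (z : ((Gf (gr s t)).obj f).left) :
    (m.ε.app f).left z = Pfst f.hom z := by
  let P : Over ((X × X : Type)) := Over.mk (TypeCat.ofHom (
    fun _ => f.hom (Pfst f.hom z) : PUnit → X × X))
  let φ : P ⟶ f := Over.homMk (TypeCat.ofHom fun _ => Pfst f.hom z) rfl
  let zP : ((Gf (gr s t)).obj P).left :=
    Gmk (u := gr s t) P.hom PUnit.unit (Psnd f.hom z) (Gcond z)
  have hz : ((Gf (gr s t)).map φ).left zP = z := by
    refine GextG ?_ ?_
    · exact (Gf_map_fst' φ zP).trans (congrArg (fun w => φ.left w) (Gmk_fst _ _ _ _))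
    · exact (Gf_map_snd' φ zP).trans (Gmk_snd _ _ _ _)
  have nat := ConcreteCategory.congr_hom (congrArg CommaMorphism.left (m.ε.naturality φ)) zP
  have key : (m.ε.app f).left (((Gf (gr s t)).map φ).left zP) = Pfst f.hom z := nat
  rw [hz] at key
  exact key

/-- the comultiplication is forced -/
lemma delta_forced (f : Over ((X × X : Type))) (z : ((Gf (gr s t)).obj f).left) :
    (m.δ.app f).left z =
      GmkG (u := gr s t) ((Gf (gr s t)).obj f) z (Psnd f.hom z) (Gobj_hom f z) := by
  have h1 := ConcreteCategory.congr_hom (congrArg CommaMorphism.left (m.left_counit f)) z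
  have h1' : (m.ε.app ((Gf (gr s t)).obj f)).left ((m.δ.app f).left z) = z := h1
  rw [eps_forced] at h1'
  have h2 := ConcreteCategory.congr_hom (congrArg CommaMorphism.left (m.right_counit f)) z
  have h2' : Psnd ((Gf (gr s t)).obj f).hom ((m.δ.app f).left z) = Psnd f.hom z := by
    have := congrArg (Psnd f.hom) h2
    exact (Gf_map_snd (m.ε.app f) ((m.δ.app f).left z)).symm.trans this
  exact Gext (h1'.trans (Gmk_fst _ _ _ _).symm) (h2'.trans (Gmk_snd _ _ _ _).symm)

/-- the lax unit is forced -/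
lemma u_forced (x : X) :
    m.u.left x = GmkG (u := gr s t) (𝟙_ (Over ((X × X : Type)))) x (mid m x)
      (Prod.ext (mid_s m x).symm (mid_t m x).symm) := by
  refine Gext ?_ ?_
  · have h := ConcreteCategory.congr_hom (congrArg CommaMorphism.left m.ε_unit) x
    have h' : (m.ε.app (𝟙_ (Over ((X × X : Type))))).left (m.u.left x) = x := h
    rw [eps_forced] at h'
    exact h'.trans (Gmk_fst _ _ _ _).symm
  · exact (Gmk_snd _ _ _ _).symm

@[simp] lemma u_snd (x : X) :
    pullback.snd (C := Type) (X := (𝟙_ (Over ((X × X : Type)))).left) (Y := A) (Z := X × X)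
      (𝟙_ (Over ((X × X : Type)))).hom (TypeCat.ofHom (gr s t)) (m.u.left x) = mid m x := rfl

/-- first projection of the lax structure map is forced -/
lemma mu_fst (f g : Over ((X × X : Type)))
    (p : (((Gf (gr s t)).obj f ⊗ (Gf (gr s t)).obj g) : Over ((X × X : Type))).left) :
    Pfst (f ⊗ g).hom ((m.μ f g).left p) =
      ⟨(Pfst f.hom p.val.1, Pfst g.hom p.val.2), hmid p⟩ := by
  have h := ConcreteCategory.congr_hom (congrArg CommaMorphism.left (m.ε_tensor f g)) p
  have h' : (m.ε.app (f ⊗ g)).left ((m.μ f g).left p) =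
      (grHom (m.ε.app f) (m.ε.app g)).left p := h
  rw [eps_forced] at h'
  refine h'.trans (Subtype.ext ?_)
  exact Prod.ext (eps_forced m f p.val.1) (eps_forced m g p.val.2)

end Forced

end GrM

namespace GrM

attribute [local instance] GrM.M

section Forced2

variable {X A : Type} {s t : A → X}

/-- the point object attached to an element of `G f` -/
def Qo (f : Over ((X × X : Type))) {u' : A → X × X} (z : ((Gf u').obj f).left)
    (h : PUnit → X × X) : Over ((X × X : Type)) := Over.mk (TypeCat.ofHom h)

variable (m : @MonoidalComonadStr (Over ((X × X : Type))) _ (M X) (Gf (gr s t)))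

noncomputable def Qob (f : Over ((X × X : Type))) (z : ((Gf (gr s t)).obj f).left) :
    Over ((X × X : Type)) :=
  Over.mk (TypeCat.ofHom (fun _ => gr s t (Psnd f.hom z) : PUnit → X × X))

lemma Qob_hom (f : Over ((X × X : Type))) (z : ((Gf (gr s t)).obj f).left) :
    (Qob f z).hom PUnit.unit = gr s t (Psnd f.hom z) := rfl

noncomputable def q1 (f : Over ((X × X : Type))) (z : ((Gf (gr s t)).obj f).left) :
    Qob f z ⟶ f :=
  Over.homMk (TypeCat.ofHom fun _ => Pfst f.hom z) (by refine ConcreteCategory.hom_ext _ _ fun _ => ?_; exact Gcond z)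

noncomputable def q2 (f : Over ((X × X : Type))) (z : ((Gf (gr s t)).obj f).left) :
    Qob f z ⟶ Om s t :=
  Over.homMk (TypeCat.ofHom fun _ => Psnd f.hom z) rfl

noncomputable def zQ (f : Over ((X × X : Type))) (z : ((Gf (gr s t)).obj f).left) :
    ((Gf (gr s t)).obj (Qob f z)).left :=
  Gmk (u := gr s t) (Qob f z).hom PUnit.unit (Psnd f.hom z) (Qob_hom f z)

lemma map_q1 (f : Over ((X × X : Type))) (z : ((Gf (gr s t)).obj f).left) :
    ((Gf (gr s t)).map (q1 f z)).left (zQ f z) = z := by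
  refine GextG ?_ ?_
  · exact (Gf_map_fst' (q1 f z) (zQ f z)).trans
      (congrArg (fun w => (q1 f z).left w) (Gmk_fst _ _ _ _))
  · exact (Gf_map_snd' (q1 f z) (zQ f z)).trans (Gmk_snd _ _ _ _)

lemma map_q2 (f : Over ((X × X : Type))) (z : ((Gf (gr s t)).obj f).left) :
    ((Gf (gr s t)).map (q2 f z)).left (zQ f z) = jA s t (Psnd f.hom z) := by
  refine GextG ?_ ?_
  · exact ((Gf_map_fst' (q2 f z) (zQ f z)).trans
      (congrArg (fun w => (q2 f z).left w) (Gmk_fst _ _ _ _))).trans (jA_fst _).symm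
  · exact ((Gf_map_snd' (q2 f z) (zQ f z)).trans (Gmk_snd _ _ _ _)).trans (jA_snd _).symm

noncomputable def pQ (f g : Over ((X × X : Type)))
    (p : (((Gf (gr s t)).obj f ⊗ (Gf (gr s t)).obj g) : Over ((X × X : Type))).left) :
    (((Gf (gr s t)).obj (Qob f p.val.1) ⊗ (Gf (gr s t)).obj (Qob g p.val.2)) :
      Over ((X × X : Type))).left :=
  ⟨(zQ f p.val.1, zQ g p.val.2),
    ((congrArg t (Gmk_snd _ _ _ _)).trans (hcmp p)).trans
      (congrArg s (Gmk_snd _ _ _ _)).symm⟩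

/-- second projection of the lax structure map is forced -/
lemma mu_snd (f g : Over ((X × X : Type)))
    (p : (((Gf (gr s t)).obj f ⊗ (Gf (gr s t)).obj g) : Over ((X × X : Type))).left) :
    pullback.snd (C := Type) (X := ((f ⊗ g : Over ((X × X : Type))).left)) (Y := A)
      (Z := X × X) (f ⊗ g).hom (TypeCat.ofHom (gr s t)) ((m.μ f g).left p) =
      mcomp m (Psnd f.hom p.val.1) (Psnd g.hom p.val.2) (hcmp p) := by
  have e1 : (grHom ((Gf (gr s t)).map (q1 f p.val.1)) ((Gf (gr s t)).map (q1 g p.val.2))).left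
      (pQ f g p) = p :=
    Subtype.ext (Prod.ext (map_q1 f p.val.1) (map_q1 g p.val.2))
  have e2 : (grHom ((Gf (gr s t)).map (q2 f p.val.1)) ((Gf (gr s t)).map (q2 g p.val.2))).left
      (pQ f g p) = jP (Psnd f.hom p.val.1) (Psnd g.hom p.val.2) (hcmp p) :=
    Subtype.ext (Prod.ext (map_q2 f p.val.1) (map_q2 g p.val.2))
  have n1 := ConcreteCategory.congr_hom (congrArg CommaMorphism.left
    (m.μ_natural (q1 f p.val.1) (q1 g p.val.2))) (pQ f g p)
  have n2 := ConcreteCategory.congr_hom (congrArg CommaMorphism.left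
    (m.μ_natural (q2 f p.val.1) (q2 g p.val.2))) (pQ f g p)
  simp only [comp_left_apply, tensorHom_eq] at n1 n2
  rw [e1] at n1
  rw [e2] at n2
  have n1' := congrArg (Psnd (f ⊗ g).hom) n1
  have n2' := congrArg (Psnd (Om s t ⊗ Om s t).hom) n2
  simp only [Psnd] at n1' n2'
  exact (n1'.trans ((Gf_map_snd _ _).trans (Gf_map_snd _ _).symm)).trans n2'.symm

end Forced2

end GrM

namespace GrM

attribute [local instance] GrM.M

section Backward2

variable {X A : Type} {s t : A → X}
variable (m : @MonoidalComonadStr (Over ((X × X : Type))) _ (M X) (Gf (gr s t)))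

lemma mu_forced (f g : Over ((X × X : Type)))
    (p : (((Gf (gr s t)).obj f ⊗ (Gf (gr s t)).obj g) : Over ((X × X : Type))).left) :
    (m.μ f g).left p = GmkG (u := gr s t) (f ⊗ g)
      (mkT f g (Pfst f.hom p.val.1) (Pfst g.hom p.val.2) (hmid p))
      (mcomp m (Psnd f.hom p.val.1) (Psnd g.hom p.val.2) (hcmp p))
      (by
        refine Prod.ext ?_ ?_
        · show (f.hom (Pfst f.hom p.val.1)).1 = s _
          rw [Gcond p.val.1, mcomp_s m]
        · show (g.hom (Pfst g.hom p.val.2)).2 = t _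
          rw [Gcond p.val.2, mcomp_t m]) := by
  refine Gext ?_ ?_
  · exact (mu_fst m f g p).trans (Gmk_fst _ _ _ _).symm
  · exact (mu_snd m f g p).trans (Gmk_snd _ _ _ _).symm

lemma comp_congr (c : CatStr X A s t) {a a' b b' : A} (ha : a = a') (hb : b = b')
    (h : t a = s b) (h' : t a' = s b') : c.comp a b h = c.comp a' b' h' := by
  subst ha; subst hb; rfl

/-- extraction of a category structure from a monoidal comonad structure -/
noncomputable def toCat : CatStr X A s t where
  id := mid m
  s_id := mid_s m
  t_id := mid_t m
  comp := mcomp m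
  s_comp := mcomp_s m
  t_comp := mcomp_t m
  id_comp a := by
    have L := ConcreteCategory.congr_hom (congrArg CommaMorphism.left (m.left_unitality (Om s t)))
      ⟨(s a, jA s t a), (congrArg s (jA_snd a)).symm⟩
    have L' := congrArg (Psnd (Om s t).hom) L
    simp only [comp_left_apply, whiskerRight_eq] at L'
    have e := (L'.trans (Gf_map_snd (λ_ (Om s t)).hom _)).trans (mu_snd m _ _ _)
    exact (mcomp_congr m rfl (jA_snd a) _ _).symm.trans (e.symm.trans (jA_snd a))
  comp_id a := by
    have L := ConcreteCategory.congr_hom (congrArg CommaMorphism.left (m.right_unitality (Om s t)))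
      ⟨(jA s t a, t a), congrArg t (jA_snd a)⟩
    have L' := congrArg (Psnd (Om s t).hom) L
    simp only [comp_left_apply, whiskerLeft_eq] at L'
    have e := (L'.trans (Gf_map_snd (ρ_ (Om s t)).hom _)).trans (mu_snd m _ _ _)
    exact (mcomp_congr m (jA_snd a) rfl _ _).symm.trans (e.symm.trans (jA_snd a))
  assoc a b cc hab hbc := by
    have L := ConcreteCategory.congr_hom (congrArg CommaMorphism.left (m.associativity (Om s t) (Om s t) (Om s t)))
      ⟨(jP a b hab, jA s t cc),
        ((congrArg t (jA_snd b)).trans hbc).trans (congrArg s (jA_snd cc)).symm⟩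
    have L' := congrArg (Psnd (Om s t ⊗ (Om s t ⊗ Om s t)).hom) L
    simp only [comp_left_apply, whiskerRight_eq, whiskerLeft_eq] at L'
    have e := (mu_snd m _ _ _).symm.trans ((Gf_map_snd (α_ (Om s t) (Om s t) (Om s t)).hom _).symm.trans L')
    have e3 := e.trans (mu_snd m _ _ _)
    exact (mcomp_congr m rfl (jA_snd cc) _ _).symm.trans (e3.trans (mcomp_congr m (jA_snd a) rfl _ _))
end Backward2

end GrM

namespace GrM

attribute [local instance] GrM.M

section Final

variable {X A : Type} {s t : A → X}

lemma CatStr_ext {c₁ c₂ : CatStr X A s t} (h1 : c₁.id = c₂.id)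
    (h2 : c₁.comp = c₂.comp) : c₁ = c₂ := by
  cases c₁; cases c₂
  dsimp only at h1 h2
  subst h1; subst h2
  rfl

lemma MCS_ext {C : Type*} [Category C] [MonoidalCategory C] {G : C ⥤ C}
    {m₁ m₂ : MonoidalComonadStr G} (hε : m₁.ε = m₂.ε) (hδ : m₁.δ = m₂.δ)
    (hu : m₁.u = m₂.u) (hμ : m₁.μ = m₂.μ) : m₁ = m₂ := by
  cases m₁; cases m₂
  dsimp only at hε hδ hu hμ
  subst hε; subst hδ; subst hu; subst hμ
  rfl

lemma left_inv (c : CatStr X A s t) : toCat (toMon c) = c := by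
  refine CatStr_ext ?_ ?_
  · funext x
    exact Gmk_snd _ _ _ _
  · funext a b h
    show Psnd (Om s t ⊗ Om s t).hom ((μc c (Om s t) (Om s t)).left (jP a b h)) = c.comp a b h
    rw [μc_left]
    exact (Gmk_snd _ _ _ _).trans (comp_congr c (jA_snd a) (jA_snd b) _ _)

lemma right_inv (m : @MonoidalComonadStr (Over ((X × X : Type))) _ (M X) (Gf (gr s t))) :
    toMon (toCat m) = m := by
  refine MCS_ext ?_ ?_ ?_ ?_
  · apply NatTrans.ext; funext f
    apply Over.OverMorphism.ext; refine ConcreteCategory.hom_ext _ _ fun z => ?_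
    exact (eps_forced m f z).symm
  · apply NatTrans.ext; funext f
    apply Over.OverMorphism.ext; refine ConcreteCategory.hom_ext _ _ fun z => ?_
    exact (delta_forced m f z).symm
  · apply Over.OverMorphism.ext; refine ConcreteCategory.hom_ext _ _ fun x => ?_
    exact (u_forced m x).symm
  · funext f g
    apply Over.OverMorphism.ext; refine ConcreteCategory.hom_ext _ _ fun p => ?_
    show (μc (toCat m) f g).left p = (m.μ f g).left p
    rw [μc_left]
    exact (mu_forced m f g p).symm

/-- the main bijection -/
noncomputable def catEquiv (X A : Type) (s t : A → X) :
    CatStr X A s t ≃ @MonoidalComonadStr (Over ((X × X : Type))) _ (M X) (Gf (gr s t)) where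
  toFun := toMon
  invFun := toCat
  left_inv := left_inv
  right_inv := right_inv

end Final

end GrM


/-- for a graph `(s,t) : A → X × X`, category structures on this graph
correspond bijectively to monoidal comonad structures on the endofunctor
`Σ_{(s,t)} ∘ (s,t)*` of `Set/(X×X)`, with respect to the pullback-tensor monoidal
structure on `Set/(X×X)`. -/
theorem stmt_15 (X A : Type) (s t : A → X) :
    ∃ M : MonoidalCategory (Over ((X × X : Type))),
      IsPullbackTensor X M ∧
      Nonempty (CatStr X A s t ≃
        @MonoidalComonadStr (Over ((X × X : Type))) _ M
          (Over.pullback (TypeCat.ofHom (show A → X × X from fun a => (s a, t a))) ⋙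
           Over.map (TypeCat.ofHom (show A → X × X from fun a => (s a, t a))))) := by
  refine ⟨GrM.M X, ⟨fun f g => rfl, rfl⟩, ⟨?_⟩⟩
  exact GrM.catEquiv X A s t

end Stmt15
end

section
/- Let G be a category equipped with a bijection S on arrows satisfying: S preserves the property that b∘a is defined iff the relevant sources/targets match via swapping, and for all composable data, b ∘ a = S c if and only if c ∘ b = S⁻¹ a. Then every arrow of G is invertible, i.e. G is a groupoid. Concretely: setting e_x = S(1_x), one shows S⁻¹a ∘ a = e_x for every a : x → y, that S e_x = 1_x, and that b ∘ S(e_x ∘ b) = 1_x for every b with source x, so every arrow has a right inverse and hence G is a groupoid. -/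
open CategoryTheory

/-- Let `G` be a category with a bijection `S` on arrows swapping sources
and targets, such that for `a : x ⟶ y`, `b : y ⟶ z`, `c : z ⟶ x` we have
`b ∘ a = S c` iff `c ∘ b = S⁻¹ a`.  Then every arrow of `G` is invertible,
i.e. `G` is a groupoid. -/
theorem stmt_17 {G : Type*} [Category G]
    (S : (Σ x y : G, x ⟶ y) ≃ (Σ x y : G, x ⟶ y))
    (hswap : ∀ a : Σ x y : G, x ⟶ y, (S a).1 = a.2.1 ∧ (S a).2.1 = a.1)
    (hstar : ∀ {x y z : G} (a : x ⟶ y) (b : y ⟶ z) (c : z ⟶ x),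
      ((⟨x, z, a ≫ b⟩ : Σ x y : G, x ⟶ y) = S ⟨z, x, c⟩) ↔
      ((⟨y, x, b ≫ c⟩ : Σ x y : G, x ⟶ y) = S.symm ⟨x, y, a⟩)) :
    ∀ {x y : G} (f : x ⟶ y), IsIso f := by
  -- extract the arrow of `S A`
  have hex : ∀ A : Σ x y : G, x ⟶ y, ∃ f : A.2.1 ⟶ A.1, S A = ⟨A.2.1, A.1, f⟩ := by
    intro A
    obtain ⟨h1, h2⟩ := hswap A
    obtain ⟨B, hB⟩ : ∃ B, S A = B := ⟨_, rfl⟩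
    obtain ⟨p, q, f⟩ := B
    rw [hB] at h1 h2
    simp only at h1 h2
    subst h1; subst h2
    exact ⟨f, hB⟩
  -- extract the arrow of `S.symm A`
  have hex' : ∀ A : Σ x y : G, x ⟶ y, ∃ f : A.2.1 ⟶ A.1, S.symm A = ⟨A.2.1, A.1, f⟩ := by
    intro A
    obtain ⟨h1, h2⟩ := hswap (S.symm A)
    rw [Equiv.apply_symm_apply] at h1 h2
    obtain ⟨B, hB⟩ : ∃ B, S.symm A = B := ⟨_, rfl⟩
    obtain ⟨p, q, f⟩ := B
    rw [hB] at h1 h2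
    simp only at h1 h2
    subst h1; subst h2
    exact ⟨f, hB⟩
  -- injectivity of sigma with equal endpoints
  have hinj : ∀ {x y : G} (u v : x ⟶ y),
      ((⟨x, y, u⟩ : Σ x y : G, x ⟶ y) = ⟨x, y, v⟩) → u = v := by
    intro x y u v h
    simpa using h
  -- every arrow has a left inverse
  have linv : ∀ {w x : G} (b : w ⟶ x), ∃ g : x ⟶ w, g ≫ b = 𝟙 x := by
    intro w x b
    -- e := arrow of S (𝟙 x)
    obtain ⟨e, hE⟩ := hex ⟨x, x, 𝟙 x⟩
    simp only at e hE
    -- step 1 specialized to a = 𝟙 x : 𝟙 x ≫ a' = e where a' = arrow of S.symm (𝟙 x)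
    obtain ⟨a', hA'⟩ := hex' ⟨x, x, 𝟙 x⟩
    simp only at a' hA'
    have h1 : (⟨x, x, (𝟙 x) ≫ a'⟩ : Σ x y : G, x ⟶ y) = S ⟨x, x, 𝟙 x⟩ := by
      rw [hstar (𝟙 x) a' (𝟙 x)]
      rw [hA']
      simp
    have ha'e : a' = e := by
      rw [hE] at h1
      have := hinj _ _ h1
      simpa using this
    -- step 2 : S ⟨x,x,e⟩ = ⟨x,x,𝟙 x⟩
    have hSe : S ⟨x, x, e⟩ = ⟨x, x, 𝟙 x⟩ := by
      rw [← ha'e, ← hA', Equiv.apply_symm_apply]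
    -- step 3 : g := arrow of S (b ≫ e) is a left inverse of b
    obtain ⟨g, hG⟩ := hex ⟨w, x, b ≫ e⟩
    simp only at g hG
    have h3 : (⟨x, x, g ≫ b⟩ : Σ x y : G, x ⟶ y) = S ⟨x, x, e⟩ := by
      rw [hstar g b e]
      rw [← hG, Equiv.symm_apply_apply]
    rw [hSe] at h3
    exact ⟨g, hinj _ _ h3⟩
  intro x y f
  obtain ⟨g, hgf⟩ := linv f
  obtain ⟨h, hhg⟩ := linv g
  have hhf : h = f := by
    calc h = h ≫ 𝟙 y := by simp
    _ = h ≫ (g ≫ f) := by rw [hgf]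
    _ = (h ≫ g) ≫ f := by simp
    _ = f := by rw [hhg]; simp
  exact ⟨g, by rw [← hhf]; exact hhg, hgf⟩
end
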